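/- Let M > 0, Q ≠ 0, Λ > 0 and s ∈ (0,1] satisfy 8Q² < 9sM² (so that Λ₋ and Λ₊ are defined and real), and assume Λ₋ < Λ < Λ₊ as well as 0 < Λ < Λ₊. Then there exists r₀ > 0 such that P(r₀,s) = 0 and P'(r₀,s) < 0. -/

import Mathlib

/-!
The common roots of `P` and `P'` are roots of `r P' - 4 P = 2 (r² - 3sMr + 2sQ²)`, i.e. they lie
in `{ρ₋, ρ₊}` with `ρ± = (3sM ± √(sβ))/2`. Evaluating `P` there gives
`P(ρ±) = (s/3) ρ±⁴ (Λ - Λ±)`, so `Λ₋ < Λ < Λ₊` means `P(ρ₋) > 0 > P(ρ₊)`, and `P` has a root `r₀`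
strictly between `ρ₋` and `ρ₊`. There the quadratic is negative, hence so is `r₀ P'(r₀)`.
-/

noncomputable section

/-- The quartic polynomial `P(r,s) = sL/3*r^4 - r^2 + 2sM*r - sQ^2` (case `Q != 0`). -/
def P (M Q Λ s r : ℝ) : ℝ := s * Λ / 3 * r ^ 4 - r ^ 2 + 2 * s * M * r - s * Q ^ 2

/-- First derivative of `P` with respect to `r`. -/
def P' (M Q Λ s r : ℝ) : ℝ := 4 * s * Λ / 3 * r ^ 3 - 2 * r + 2 * s * M

/-- Second derivative of `P` with respect to `r`. -/
def P'' (M Q Λ s r : ℝ) : ℝ := 4 * s * Λ * r ^ 2 - 2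

/-- `Λ₋`, defined for `β := 9sM² − 8Q² ≥ 0`. -/
def Λminus (M Q s : ℝ) : ℝ :=
  1 / (32 * s ^ 2 * Q ^ 6) *
    (8 * Q ^ 4 - (9 * s * M ^ 2 - 8 * Q ^ 2) * (9 * s * M ^ 2 - 8 * Q ^ 2 + 4 * Q ^ 2)
      - 3 * Real.sqrt (s * M ^ 2 * (9 * s * M ^ 2 - 8 * Q ^ 2) ^ 3))

/-- `Λ₊`, defined for `β := 9sM² − 8Q² ≥ 0`. -/
def Λplus (M Q s : ℝ) : ℝ :=
  1 / (32 * s ^ 2 * Q ^ 6) *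
    (8 * Q ^ 4 - (9 * s * M ^ 2 - 8 * Q ^ 2) * (9 * s * M ^ 2 - 8 * Q ^ 2 + 4 * Q ^ 2)
      + 3 * Real.sqrt (s * M ^ 2 * (9 * s * M ^ 2 - 8 * Q ^ 2) ^ 3))

/-- The value of `Λ` for which `(3sM + t)/2` is a double root of `P`, where `t² = sβ`. -/
def criticalΛ (M Q s t : ℝ) : ℝ :=
  (8 * Q ^ 4 - (9 * s * M ^ 2 - 8 * Q ^ 2) * (9 * s * M ^ 2 - 8 * Q ^ 2 + 4 * Q ^ 2)
      + 3 * M * (9 * s * M ^ 2 - 8 * Q ^ 2) * t) / (32 * s ^ 2 * Q ^ 6)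

section

variable {M Q Λ s : ℝ}

theorem sqrt_mul_sq_mul_pow_three (hM : 0 ≤ M) {β : ℝ} (hβ : 0 ≤ β) :
    √(s * M ^ 2 * β ^ 3) = M * β * √(s * β) := by
  rw [show s * M ^ 2 * β ^ 3 = (M * β) ^ 2 * (s * β) by ring,
    Real.sqrt_mul (sq_nonneg _), Real.sqrt_sq (mul_nonneg hM hβ)]

theorem Λplus_eq_criticalΛ (hM : 0 ≤ M) (hβ : 0 ≤ 9 * s * M ^ 2 - 8 * Q ^ 2) :
    Λplus M Q s = criticalΛ M Q s √(s * (9 * s * M ^ 2 - 8 * Q ^ 2)) := by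
  rw [Λplus, criticalΛ, sqrt_mul_sq_mul_pow_three hM hβ]
  ring

theorem Λminus_eq_criticalΛ (hM : 0 ≤ M) (hβ : 0 ≤ 9 * s * M ^ 2 - 8 * Q ^ 2) :
    Λminus M Q s = criticalΛ M Q s (-√(s * (9 * s * M ^ 2 - 8 * Q ^ 2))) := by
  rw [Λminus, criticalΛ, sqrt_mul_sq_mul_pow_three hM hβ]
  ring

theorem pow_four_mul_criticalΛ (hs : s ≠ 0) (hQ : Q ≠ 0) {t : ℝ}
    (ht : t ^ 2 = 9 * s ^ 2 * M ^ 2 - 8 * s * Q ^ 2) :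
    ((3 * s * M + t) / 2) ^ 4 * criticalΛ M Q s t = 3 * (M * ((3 * s * M + t) / 2) - Q ^ 2) := by
  rw [criticalΛ, mul_div_assoc', div_eq_iff (by positivity)]
  linear_combination ((-3/2 : ℝ) * Q ^ 4 * t ^ 2
    + (-3/2 : ℝ) * M * Q ^ 2 * t ^ 3 + 12 * s * Q ^ 6 + (-6 : ℝ) * s * M * Q ^ 4 * t
    + (-45/4 : ℝ) * s * M ^ 2 * Q ^ 2 * t ^ 2 + (27/16 : ℝ) * s * M ^ 3 * t ^ 3
    + (-9/2 : ℝ) * s ^ 2 * M ^ 2 * Q ^ 4 + (-27 : ℝ) * s ^ 2 * M ^ 3 * Q ^ 2 * t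
    + (243/16 : ℝ) * s ^ 2 * M ^ 4 * t ^ 2 + (-81/4 : ℝ) * s ^ 3 * M ^ 4 * Q ^ 2
    + (729/16 : ℝ) * s ^ 3 * M ^ 5 * t + (729/16 : ℝ) * s ^ 4 * M ^ 6) * ht

theorem mul_P'_sub_four_mul_P (r : ℝ) :
    r * P' M Q Λ s r - 4 * P M Q Λ s r = 2 * (r ^ 2 - 3 * s * M * r + 2 * s * Q ^ 2) := by
  unfold P P'
  ring

theorem P'_neg_of_P_eq_zero {r : ℝ} (hr : 0 < r) (hP : P M Q Λ s r = 0)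
    (hq : r ^ 2 - 3 * s * M * r + 2 * s * Q ^ 2 < 0) : P' M Q Λ s r < 0 := by
  have h := mul_P'_sub_four_mul_P (M := M) (Q := Q) (Λ := Λ) (s := s) r
  rw [hP] at h
  exact neg_of_mul_neg_right (by linarith) hr.le

theorem P_eq_of_sq_eq {ρ : ℝ} (hρ : ρ ^ 2 = 3 * s * M * ρ - 2 * s * Q ^ 2) :
    P M Q Λ s ρ = s / 3 * (ρ ^ 4 * Λ - 3 * (M * ρ - Q ^ 2)) := by
  unfold P
  linear_combination -hρ

theorem P_eq_mul_sub_criticalΛ (hs : s ≠ 0) (hQ : Q ≠ 0) {t : ℝ}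
    (ht : t ^ 2 = 9 * s ^ 2 * M ^ 2 - 8 * s * Q ^ 2) :
    P M Q Λ s ((3 * s * M + t) / 2)
      = s / 3 * ((3 * s * M + t) / 2) ^ 4 * (Λ - criticalΛ M Q s t) := by
  rw [P_eq_of_sq_eq (by linear_combination ht / 4), ← pow_four_mul_criticalΛ hs hQ ht]
  ring

theorem continuous_P : Continuous (P M Q Λ s) := by
  unfold P
  fun_prop

end

theorem exists_r0_case_C1_general (M Q Λ s : ℝ)
    (hM : 0 < M) (hQ : Q ≠ 0) (hs0 : 0 < s)
    (hβ : 8 * Q ^ 2 < 9 * s * M ^ 2)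
    (hlo : Λminus M Q s < Λ) (hhi : Λ < Λplus M Q s) :
    ∃ r₀ : ℝ, 0 < r₀ ∧ P M Q Λ s r₀ = 0 ∧ P' M Q Λ s r₀ < 0 := by
  have hβ₀ : 0 ≤ 9 * s * M ^ 2 - 8 * Q ^ 2 := by linarith
  set t := √(s * (9 * s * M ^ 2 - 8 * Q ^ 2))
  have ht₀ : 0 ≤ t := Real.sqrt_nonneg _
  have ht : t ^ 2 = 9 * s ^ 2 * M ^ 2 - 8 * s * Q ^ 2 := by
    rw [Real.sq_sqrt (by positivity)]
    ring
  have ht_lt : t < 3 * s * M :=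
    (Real.sqrt_lt' (by positivity)).2 (by nlinarith [mul_pos hs0 (sq_pos_of_ne_zero hQ)])
  have hρ_pos : 0 < (3 * s * M + -t) / 2 := by linarith
  have hP_lo : 0 < P M Q Λ s ((3 * s * M + -t) / 2) := by
    rw [P_eq_mul_sub_criticalΛ hs0.ne' hQ ((neg_sq t).trans ht)]
    have := Λminus_eq_criticalΛ hM.le hβ₀ ▸ hlo
    exact mul_pos (mul_pos (by positivity) (pow_pos hρ_pos 4)) (by linarith)
  have hP_hi : P M Q Λ s ((3 * s * M + t) / 2) < 0 := by
    rw [P_eq_mul_sub_criticalΛ hs0.ne' hQ ht]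
    have := Λplus_eq_criticalΛ hM.le hβ₀ ▸ hhi
    exact mul_neg_of_pos_of_neg (by positivity) (by linarith)
  obtain ⟨r₀, ⟨hr_lo, hr_hi⟩, hr₀⟩ := intermediate_value_Ioo'
    (by linarith) continuous_P.continuousOn ⟨hP_hi, hP_lo⟩
  refine ⟨r₀, by linarith, hr₀, P'_neg_of_P_eq_zero (by linarith) hr₀ ?_⟩
  have hfactor : r₀ ^ 2 - 3 * s * M * r₀ + 2 * s * Q ^ 2
      = (r₀ - (3 * s * M + -t) / 2) * (r₀ - (3 * s * M + t) / 2) := by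
    linear_combination ht / 4
  rw [hfactor]
  exact mul_neg_of_pos_of_neg (by linarith) (by linarith)

/-- Case C₁: existence of a simple root `r₀ > 0` with negative derivative. -/
theorem exists_r0_case_C1 (M Q Λ s : ℝ)
    (hM : 0 < M) (hQ : Q ≠ 0) (hΛ : 0 < Λ) (hs0 : 0 < s) (hs1 : s ≤ 1)
    (hβ : 8 * Q ^ 2 < 9 * s * M ^ 2)
    (hlo : Λminus M Q s < Λ) (hhi : Λ < Λplus M Q s) :
    ∃ r₀ : ℝ, 0 < r₀ ∧ P M Q Λ s r₀ = 0 ∧ P' M Q Λ s r₀ < 0 :=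
  exists_r0_case_C1_general M Q Λ s hM hQ hs0 hβ hlo hhi
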